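/- arXiv:1901.07991 — 4 statements merged into one kernel-verified Lean document; each statement's English description precedes it below -/
import Mathlib

section
/- Let X be a d×d Hermitian matrix with Tr(X) = 1 and spectral decomposition X = Σ_{i=1}^d λ_i |g_i⟩⟨g_i| with orthonormal eigenvectors g_i. Then there exists a real number x₀ such that Σ_{i=1}^d max(λ_i − x₀, 0) = 1, and the matrix Σ_{i=1}^d max(λ_i − x₀, 0) |g_i⟩⟨g_i| is the unique minimizer of the Frobenius distance ‖X − τ‖₂ over all density matrices τ on ℂ^d. -/
open MeasureTheory ProbabilityTheory Matrix
open scoped ComplexOrder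

/-- The Borel (= product) σ-algebra on `d × d` complex matrices. -/
noncomputable instance matrixMeasurableSpace (d : ℕ) : MeasurableSpace (Matrix (Fin d) (Fin d) ℂ) :=
  MeasurableSpace.pi

/-- A density matrix: positive semidefinite with trace one. -/
def IsDensityMatrix {d : ℕ} (ρ : Matrix (Fin d) (Fin d) ℂ) : Prop :=
  ρ.PosSemidef ∧ ρ.trace = 1

/-- The rank-one projection `U E_{jj} U*`. -/
noncomputable def covProj (d : ℕ) (j : Fin d) (U : Matrix.unitaryGroup (Fin d) ℂ) :
    Matrix (Fin d) (Fin d) ℂ :=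
  (U : Matrix (Fin d) (Fin d) ℂ) * Matrix.single j j 1 *
    star (U : Matrix (Fin d) (Fin d) ℂ)

/-- The outcome law `μ_ρ` of the covariant measurement on the state `ρ`, built from the Haar
probability measure `μ` on the unitary group: the distribution of `U E_{JJ} U*` where `U ~ μ`
and, conditionally on `U`, `J = j` has probability `⟨e_j, U* ρ U e_j⟩`. -/
noncomputable def covariantLaw (d : ℕ) (μ : Measure (Matrix.unitaryGroup (Fin d) ℂ))
    (ρ : Matrix (Fin d) (Fin d) ℂ) : Measure (Matrix (Fin d) (Fin d) ℂ) :=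
  Measure.sum fun j : Fin d =>
    Measure.map (covProj d j)
      (μ.withDensity fun U =>
        ENNReal.ofReal
          ((star (U : Matrix (Fin d) (Fin d) ℂ) * ρ * (U : Matrix (Fin d) (Fin d) ℂ)) j j).re)

/-- The least squares estimator `ρ̂_LS = (1/N) Σ_i ((d+1) P_i - I)`. -/
noncomputable def lsEst {Ω : Type*} (d N : ℕ) (P : Fin N → Ω → Matrix (Fin d) (Fin d) ℂ)
    (ω : Ω) : Matrix (Fin d) (Fin d) ℂ :=
  (N : ℂ)⁻¹ • ∑ i, ((d + 1 : ℂ) • P i ω - 1)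

/-- Squared Frobenius norm `‖A‖₂² = Tr(A* A)`. -/
noncomputable def frobSq {d : ℕ} (A : Matrix (Fin d) (Fin d) ℂ) : ℝ :=
  (Matrix.trace (Aᴴ * A)).re

/-- Frobenius norm `‖A‖₂ = (Tr(A* A))^{1/2}`. -/
noncomputable def frobNorm {d : ℕ} (A : Matrix (Fin d) (Fin d) ℂ) : ℝ :=
  Real.sqrt (Matrix.trace (Aᴴ * A)).re

/-- Operator norm (largest singular value) of a matrix, as the `ℓ² → ℓ²` operator norm. -/
noncomputable def opNorm {d : ℕ} (A : Matrix (Fin d) (Fin d) ℂ) : ℝ :=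
  ‖LinearMap.toContinuousLinearMap (Matrix.toEuclideanLin A)‖

/-- Trace norm `‖A‖₁ = Tr|A|`: the sum of the singular values of `A`. -/
noncomputable def traceNorm {d : ℕ} (A : Matrix (Fin d) (Fin d) ℂ) : ℝ :=
  ∑ i, Real.sqrt ((Matrix.posSemidef_conjTranspose_mul_self A).1.eigenvalues i)

/-- The rank-`r` density matrix `ρ_r = (1/r) Σ_{i=1}^r E_{ii}`. -/
noncomputable def rhoR (d r : ℕ) : Matrix (Fin d) (Fin d) ℂ :=
  (r : ℂ)⁻¹ • ∑ i : Fin d, if (i : ℕ) < r then Matrix.single i i 1 else 0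

/-!
A density matrix `M` is the Frobenius projection of `X` as soon as `Re Tr((X - M)ᴴ (M - τ)) ≥ 0`
for every density matrix `τ`, since then `‖X - τ‖₂² ≥ ‖X - M‖₂² + ‖M - τ‖₂²`. For
`M = Σ μᵢ |gᵢ⟩⟨gᵢ|` with `μᵢ = max(λᵢ - x₀, 0)` this quantity equals `Σ (λᵢ - μᵢ)(μᵢ - tᵢ)`,
where `tᵢ = ⟨gᵢ, τ gᵢ⟩` is a probability vector. Now `λᵢ - μᵢ = min(λᵢ, x₀)` is at most `x₀`,
with equality wherever `μᵢ > 0`, so the sum is at least `x₀ (Σ μᵢ - Σ tᵢ) = 0`. The threshold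
`x₀` exists by the intermediate value theorem.
-/

open Finset

section Truncation

variable {ι : Type*} [Fintype ι]

theorem exists_sum_max_sub_eq [Nonempty ι] (lam : ι → ℝ) {s : ℝ} (hs : 0 ≤ s) :
    ∃ x : ℝ, ∑ i, max (lam i - x) 0 = s := by
  have hcont : Continuous fun x : ℝ => ∑ i, max (lam i - x) 0 := by fun_prop
  set lo := univ.inf' univ_nonempty lam - s
  set hi := univ.sup' univ_nonempty lam
  obtain ⟨i⟩ := ‹Nonempty ι›
  have hlo_le_hi : lo ≤ hi := by
    linarith [inf'_le lam (mem_univ i), le_sup' lam (mem_univ i)]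
  have hsum_hi : ∑ j, max (lam j - hi) 0 = 0 :=
    sum_eq_zero fun j _ => max_eq_right (sub_nonpos.2 (le_sup' lam (mem_univ j)))
  have hsum_lo : s ≤ ∑ j, max (lam j - lo) 0 :=
    calc s ≤ max (lam i - lo) 0 := le_max_of_le_left (by linarith [inf'_le lam (mem_univ i)])
      _ ≤ ∑ j, max (lam j - lo) 0 :=
        single_le_sum (fun j _ => le_max_right (lam j - lo) 0) (mem_univ i)
  obtain ⟨x, -, hx⟩ :=
    intermediate_value_Icc' hlo_le_hi hcont.continuousOn ⟨by rwa [hsum_hi], hsum_lo⟩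
  exact ⟨x, hx⟩

theorem sum_sub_max_mul_max_sub_nonneg (lam t : ι → ℝ) (x : ℝ) (ht : ∀ i, 0 ≤ t i)
    (hsum : ∑ i, max (lam i - x) 0 = ∑ i, t i) :
    0 ≤ ∑ i, (lam i - max (lam i - x) 0) * (max (lam i - x) 0 - t i) := by
  have hterm (i : ι) : x * (max (lam i - x) 0 - t i) ≤
      (lam i - max (lam i - x) 0) * (max (lam i - x) 0 - t i) := by
    rcases le_total (lam i) x with h | h
    · rw [max_eq_right (sub_nonpos.2 h)]
      nlinarith [ht i]
    · rw [max_eq_left (sub_nonneg.2 h)]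
      exact le_of_eq (by ring)
  calc 0 = ∑ i, x * (max (lam i - x) 0 - t i) := by
        rw [← mul_sum, sum_sub_distrib, hsum, sub_self, mul_zero]
    _ ≤ _ := sum_le_sum fun i _ => hterm i

end Truncation

section RankOne

variable {n ι : Type*} [Fintype n] [Fintype ι]

theorem trace_vecMulVec_star_mul (v : n → ℂ) (A : Matrix n n ℂ) :
    (vecMulVec v (star v) * A).trace = star v ⬝ᵥ (A *ᵥ v) := by
  rw [trace_mul_comm, mul_vecMulVec, trace_vecMulVec, dotProduct_comm]

theorem re_trace_sum_smul_vecMulVec_mul (g : ι → n → ℂ) (a : ι → ℝ) (A : Matrix n n ℂ) :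
    ((∑ i, a i • vecMulVec (g i) (star (g i))) * A).trace.re =
      ∑ i, a i * (star (g i) ⬝ᵥ (A *ᵥ g i)).re := by
  simp [sum_mul, trace_sum, smul_mul_assoc, trace_smul, trace_vecMulVec_star_mul]

theorem trace_sum_smul_vecMulVec {g : ι → n → ℂ} (hg : ∀ i, star (g i) ⬝ᵥ g i = 1) (a : ι → ℝ) :
    (∑ i, a i • vecMulVec (g i) (star (g i))).trace = ∑ i, (a i : ℂ) := by
  simp [trace_sum, trace_smul, dotProduct_comm (g _), hg]

theorem isHermitian_sum_smul_vecMulVec (g : ι → n → ℂ) (a : ι → ℝ) :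
    (∑ i, a i • vecMulVec (g i) (star (g i))).IsHermitian :=
  isSelfAdjoint_sum _ fun i _ =>
    (posSemidef_vecMulVec_self_star (g i)).isHermitian.smul (.all (a i))

theorem posSemidef_sum_smul_vecMulVec (g : ι → n → ℂ) {a : ι → ℝ} (ha : ∀ i, 0 ≤ a i) :
    (∑ i, a i • vecMulVec (g i) (star (g i))).PosSemidef :=
  posSemidef_sum _ fun i _ => (posSemidef_vecMulVec_self_star (g i)).smul (ha i)

variable [DecidableEq ι]

theorem sum_smul_vecMulVec_mulVec {g : ι → n → ℂ}
    (hg : ∀ i j, star (g i) ⬝ᵥ g j = if i = j then 1 else 0) (a : ι → ℝ) (i : ι) :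
    (∑ j, a j • vecMulVec (g j) (star (g j))) *ᵥ g i = a i • g i := by
  simp [sum_mulVec, smul_mulVec, vecMulVec_mulVec, hg]

theorem sum_vecMulVec_star_eq_one {g : ι → ι → ℂ}
    (hg : ∀ i j, star (g i) ⬝ᵥ g j = if i = j then 1 else 0) :
    ∑ i, vecMulVec (g i) (star (g i)) = 1 := by
  set U : Matrix ι ι ℂ := of fun a i => g i a
  have hU : Uᴴ * U = 1 := by
    ext i j
    simpa [U, mul_apply, one_apply, dotProduct] using hg i j
  calc ∑ i, vecMulVec (g i) (star (g i)) = U * Uᴴ := by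
        ext a b
        simp [U, Matrix.sum_apply, mul_apply, vecMulVec_apply]
    _ = 1 := mul_eq_one_comm.mp hU

theorem sum_star_dotProduct_mulVec_eq_trace {g : ι → ι → ℂ}
    (hg : ∀ i j, star (g i) ⬝ᵥ g j = if i = j then 1 else 0) (A : Matrix ι ι ℂ) :
    ∑ i, star (g i) ⬝ᵥ (A *ᵥ g i) = A.trace := by
  simp_rw [← trace_vecMulVec_star_mul, ← trace_sum, ← sum_mul, sum_vecMulVec_star_eq_one hg,
    one_mul]

end RankOne

section Frobenius

variable {d : ℕ}

theorem frobSq_nonneg (A : Matrix (Fin d) (Fin d) ℂ) : 0 ≤ frobSq A :=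
  (Complex.nonneg_iff.mp (posSemidef_conjTranspose_mul_self A).trace_nonneg).1

theorem eq_zero_of_frobSq_eq_zero {A : Matrix (Fin d) (Fin d) ℂ} (h : frobSq A = 0) : A = 0 := by
  have him := (Complex.nonneg_iff.mp (posSemidef_conjTranspose_mul_self A).trace_nonneg).2
  exact trace_conjTranspose_mul_self_eq_zero_iff.mp (Complex.ext h him.symm)

theorem frobSq_add (A B : Matrix (Fin d) (Fin d) ℂ) :
    frobSq (A + B) = frobSq A + frobSq B + 2 * (Aᴴ * B).trace.re := by
  have hcross : (Bᴴ * A).trace.re = (Aᴴ * B).trace.re := by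
    rw [← conjTranspose_conjTranspose A, ← conjTranspose_mul, trace_conjTranspose,
      conjTranspose_conjTranspose, RCLike.star_def, Complex.conj_re]
  simp only [frobSq, conjTranspose_add, add_mul, mul_add, trace_add, Complex.add_re, hcross]
  ring

theorem frobNorm_sub_le_and_eq_of_re_trace_nonneg {X M τ : Matrix (Fin d) (Fin d) ℂ}
    (h : 0 ≤ ((X - M)ᴴ * (M - τ)).trace.re) :
    frobNorm (X - M) ≤ frobNorm (X - τ) ∧ (frobNorm (X - τ) ≤ frobNorm (X - M) → τ = M) := by
  have hpythag : frobSq (X - M) + frobSq (M - τ) ≤ frobSq (X - τ) := by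
    rw [← sub_add_sub_cancel X M τ, frobSq_add]
    linarith
  have hsq_le : frobSq (X - M) ≤ frobSq (X - τ) := by linarith [frobSq_nonneg (M - τ)]
  refine ⟨Real.sqrt_le_sqrt hsq_le, fun hnorm_le => ?_⟩
  have hsq_ge : frobSq (X - τ) ≤ frobSq (X - M) :=
    (Real.sqrt_le_sqrt_iff (frobSq_nonneg _)).mp hnorm_le
  have hMτ : frobSq (M - τ) = 0 := le_antisymm (by linarith) (frobSq_nonneg _)
  exact (sub_eq_zero.mp (eq_zero_of_frobSq_eq_zero hMτ)).symm

end Frobenius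

theorem frobenius_projection_eigenvalue_truncation_general
    (d : ℕ) (X : Matrix (Fin d) (Fin d) ℂ) (htr : X.trace = 1)
    (lam : Fin d → ℝ) (g : Fin d → Fin d → ℂ)
    (horth : ∀ i j, (∑ a, star (g i a) * g j a) = if i = j then 1 else 0)
    (hdecomp : X = ∑ i, lam i • Matrix.vecMulVec (g i) (star (g i))) :
    ∃ x₀ : ℝ, ∃ M : Matrix (Fin d) (Fin d) ℂ,
      M = ∑ i, max (lam i - x₀) 0 • Matrix.vecMulVec (g i) (star (g i)) ∧
      (∑ i, max (lam i - x₀) 0) = 1 ∧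
      IsDensityMatrix M ∧
      ∀ τ : Matrix (Fin d) (Fin d) ℂ, IsDensityMatrix τ →
        frobNorm (X - M) ≤ frobNorm (X - τ) ∧
        (frobNorm (X - τ) ≤ frobNorm (X - M) → τ = M) := by
  have : Nonempty (Fin d) := Fin.pos_iff_nonempty.mp <| Nat.pos_of_ne_zero <| by
    rintro rfl
    simp at htr
  have hunit (i : Fin d) : star (g i) ⬝ᵥ g i = 1 := (horth i i).trans (if_pos rfl)
  obtain ⟨x₀, hx₀⟩ := exists_sum_max_sub_eq lam zero_le_one
  set μ : Fin d → ℝ := fun i => max (lam i - x₀) 0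
  set M := ∑ i, μ i • vecMulVec (g i) (star (g i))
  have hMτ (τ : Matrix (Fin d) (Fin d) ℂ) (i : Fin d) :
      (star (g i) ⬝ᵥ ((M - τ) *ᵥ g i)).re = μ i - (star (g i) ⬝ᵥ (τ *ᵥ g i)).re := by
    simp [M, sub_mulVec, sum_smul_vecMulVec_mulVec horth, hunit]
  have hXM : X - M = ∑ i, (lam i - μ i) • vecMulVec (g i) (star (g i)) := by
    simp only [hdecomp, M, ← sum_sub_distrib, sub_smul]
  refine ⟨x₀, M, rfl, hx₀, ⟨posSemidef_sum_smul_vecMulVec g fun i => le_max_right _ _, ?_⟩,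
    fun τ hτ => frobNorm_sub_le_and_eq_of_re_trace_nonneg ?_⟩
  · rw [trace_sum_smul_vecMulVec hunit]
    exact_mod_cast hx₀
  rw [hXM, (isHermitian_sum_smul_vecMulVec g _).eq, re_trace_sum_smul_vecMulVec_mul]
  simp_rw [hMτ]
  refine sum_sub_max_mul_max_sub_nonneg lam _ x₀ (fun i => hτ.1.re_dotProduct_nonneg (g i)) ?_
  rw [hx₀, ← Complex.re_sum, sum_star_dotProduct_mulVec_eq_trace horth, hτ.2, Complex.one_re]

/-- Eigenvalue-truncation description of the Frobenius projection onto density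
matrices: if `X` is Hermitian with trace one and spectral decomposition
`X = Σ λᵢ |gᵢ⟩⟨gᵢ|`, then there is `x₀ ∈ ℝ` with `Σ max(λᵢ − x₀, 0) = 1`, and
`M = Σ max(λᵢ − x₀, 0) |gᵢ⟩⟨gᵢ|` is the unique Frobenius-distance minimizer among density
matrices. -/
theorem frobenius_projection_eigenvalue_truncation
    (d : ℕ) (X : Matrix (Fin d) (Fin d) ℂ) (hX : X.IsHermitian) (htr : X.trace = 1)
    (lam : Fin d → ℝ) (g : Fin d → Fin d → ℂ)
    (horth : ∀ i j, (∑ a, star (g i a) * g j a) = if i = j then 1 else 0)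
    (hdecomp : X = ∑ i, lam i • Matrix.vecMulVec (g i) (star (g i))) :
    ∃ x₀ : ℝ, ∃ M : Matrix (Fin d) (Fin d) ℂ,
      M = ∑ i, max (lam i - x₀) 0 • Matrix.vecMulVec (g i) (star (g i)) ∧
      (∑ i, max (lam i - x₀) 0) = 1 ∧
      IsDensityMatrix M ∧
      ∀ τ : Matrix (Fin d) (Fin d) ℂ, IsDensityMatrix τ →
        frobNorm (X - M) ≤ frobNorm (X - τ) ∧
        (frobNorm (X - τ) ≤ frobNorm (X - M) → τ = M) :=
  frobenius_projection_eigenvalue_truncation_general d X htr lam g horth hdecomp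
end

section
/- For every d ≥ 1 and every d×d complex matrix ρ (in particular every density matrix), the measure-and-prepare channel of the covariant measurement satisfies d·∫_{U(d)} Tr(ρ · U E₁₁ U*) · U E₁₁ U* dU = (ρ + Tr(ρ)·I)/(d+1); in particular, for a density matrix ρ this equals (ρ + I)/(d+1). -/
open MeasureTheory ProbabilityTheory Matrix
open scoped ComplexOrder

/-!
Write `u` for the `z`-th column of `U ~ μ`, so that `covProj d z U = u u*`. The channel is a
contraction of `ρ` with the moments `𝔼[u_j ū_i u_a ū_b]`, and left invariance of `μ` makes these
moments invariant under `u ↦ V u` for every unitary `V`. Diagonal phases kill every moment unless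
`{j, a} = {i, b}` as multisets; permutations make the surviving moments depend only on whether
`j = a`; and the square root `((1 + i) • 1 + (1 - i) • S) / 2` of a transposition `S`, which mixes
two coordinates evenly, gives `𝔼|u_p|⁴ = 2 𝔼|u_p u_q|²`. As `‖u‖ = 1` the moments `𝔼|u_j u_a|²`
sum to one, hence `𝔼[u_j ū_i u_a ū_b] = (δ_ji δ_ab + δ_jb δ_ai) / (d (d + 1))`.
-/

open ComplexConjugate Complex

theorem Equiv.Perm.exists_apply_eq_and_apply_eq {α : Type*} [DecidableEq α] {p q j a : α}
    (hpq : p ≠ q) (hja : j ≠ a) : ∃ σ : Equiv.Perm α, σ p = j ∧ σ q = a := by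
  set q' := Equiv.swap p j q
  have hq' : q' ≠ j := by
    rw [Ne, Equiv.swap_apply_eq_iff, Equiv.swap_apply_right]
    exact hpq.symm
  refine ⟨(Equiv.swap p j).trans (Equiv.swap q' a), ?_, ?_⟩
  · simp [Equiv.swap_apply_of_ne_of_ne hq'.symm hja]
  · simp [q']

namespace Matrix

variable {n : Type*} [Fintype n] [DecidableEq n]

theorem diagonal_mem_unitaryGroup {t : n → ℂ} (ht : ∀ i, conj (t i) * t i = 1) :
    diagonal t ∈ unitaryGroup n ℂ := by
  rw [mem_unitaryGroup_iff', star_eq_conjTranspose, diagonal_conjTranspose, diagonal_mul_diagonal]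
  simp [ht]

theorem permMatrix_mem_unitaryGroup (σ : Equiv.Perm n) : σ.permMatrix ℂ ∈ unitaryGroup n ℂ := by
  rw [mem_unitaryGroup_iff', star_eq_conjTranspose, conjTranspose_permMatrix, ← permMatrix_mul,
    mul_inv_cancel, permMatrix_one]

noncomputable def sqrtSwapMatrix (p q : n) : Matrix n n ℂ :=
  ((1 + I) / 2) • 1 + ((1 - I) / 2) • (Equiv.swap p q).permMatrix ℂ

theorem sqrtSwapMatrix_mem_unitaryGroup (p q : n) : sqrtSwapMatrix p q ∈ unitaryGroup n ℂ := by
  rw [mem_unitaryGroup_iff', sqrtSwapMatrix]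
  set S := (Equiv.swap p q).permMatrix ℂ
  have hstar : star S = S := by
    rw [star_eq_conjTranspose, conjTranspose_permMatrix, Equiv.swap_inv]
  have hsq : S * S = 1 := by
    rw [← permMatrix_mul, Equiv.swap_mul_self, permMatrix_one]
  have hconj : star ((1 + I) / 2) = (1 - I) / 2 ∧ star ((1 - I) / 2) = (1 + I) / 2 := by
    constructor <;> simp [sub_eq_add_neg]
  simp only [star_add, star_smul, star_one, hstar, hconj, add_mul, mul_add, smul_mul_smul,
    one_mul, mul_one, hsq]
  match_scalars
  · linear_combination (-1 / 2 : ℂ) * I_sq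
  · linear_combination (1 / 2 : ℂ) * I_sq

theorem sqrtSwapMatrix_mul_apply (p q x z : n) (U : Matrix n n ℂ) :
    (sqrtSwapMatrix p q * U) x z = (1 + I) / 2 * U x z + (1 - I) / 2 * U (Equiv.swap p q x) z := by
  simp [sqrtSwapMatrix, add_mul, Equiv.Perm.permMatrix, PEquiv.toMatrix_toPEquiv_mul]

theorem add_trace_smul_one_apply_eq_sum {R : Type*} [CommSemiring R] (ρ : Matrix n n R)
    (a b : n) :
    (ρ + ρ.trace • 1) a b =
      ∑ k, ∑ l, ρ k l * ((1 : Matrix n n R) l k * (1 : Matrix n n R) a b +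
        (1 : Matrix n n R) l b * (1 : Matrix n n R) a k) := by
  simp [one_apply, mul_add, Finset.sum_add_distrib, trace, add_comm]

end Matrix

theorem conj_ite_I_mul_self {α : Type*} [DecidableEq α] (c x : α) :
    conj (if x = c then I else 1) * (if x = c then I else 1) = 1 := by
  split_ifs <;> simp

instance matrixBorelSpace (d : ℕ) : BorelSpace (Matrix (Fin d) (Fin d) ℂ) :=
  inferInstanceAs (BorelSpace (Fin d → Fin d → ℂ))

section CovProj

variable {d : ℕ} (z : Fin d)

theorem covProj_apply (U : unitaryGroup (Fin d) ℂ) (x y : Fin d) :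
    covProj d z U x y = U.1 x z * conj (U.1 y z) := by
  simp [covProj, mul_apply, single_apply, ite_and, Finset.sum_ite_eq]

theorem trace_covProj (U : unitaryGroup (Fin d) ℂ) : (covProj d z U).trace = 1 := by
  rw [covProj, trace_mul_cycle, UnitaryGroup.star_mul_self, one_mul, trace_single_eq_same]

theorem continuous_covProj_apply (x y : Fin d) : Continuous fun U => covProj d z U x y := by
  simp only [covProj_apply]
  have hU : Continuous fun U : unitaryGroup (Fin d) ℂ => U.1 := continuous_subtype_val
  exact (hU.matrix_elem x z).mul (continuous_conj.comp (hU.matrix_elem y z))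

theorem norm_covProj_apply_le (U : unitaryGroup (Fin d) ℂ) (x y : Fin d) :
    ‖covProj d z U x y‖ ≤ 1 := by
  rw [covProj_apply, norm_mul, RCLike.norm_conj]
  exact mul_le_one₀ (entry_norm_bound_of_unitary U.2 _ _) (norm_nonneg _)
    (entry_norm_bound_of_unitary U.2 _ _)

theorem integrable_covProj_mul_covProj (μ : Measure (unitaryGroup (Fin d) ℂ)) [IsFiniteMeasure μ]
    (j i a b : Fin d) : Integrable (fun U => covProj d z U j i * covProj d z U a b) μ := by
  refine .of_bound ((continuous_covProj_apply z j i).mul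
    (continuous_covProj_apply z a b)).aestronglyMeasurable 1 (ae_of_all _ fun U => ?_)
  rw [norm_mul, ← one_mul 1]
  exact mul_le_mul (norm_covProj_apply_le z U j i) (norm_covProj_apply_le z U a b)
    (norm_nonneg _) zero_le_one

end CovProj

section ProjMoment

variable {d : ℕ} (μ : Measure (unitaryGroup (Fin d) ℂ)) (z : Fin d)

noncomputable def projMoment (j i a b : Fin d) : ℂ :=
  ∫ U, covProj d z U j i * covProj d z U a b ∂μ

theorem integral_trace_mul_covProj_mul [IsFiniteMeasure μ] (ρ : Matrix (Fin d) (Fin d) ℂ)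
    (a b : Fin d) :
    ∫ U, (ρ * covProj d z U).trace * covProj d z U a b ∂μ =
      ∑ k, ∑ l, ρ k l * projMoment μ z l k a b := by
  have hint := integrable_covProj_mul_covProj z μ
  have hpt (U : unitaryGroup (Fin d) ℂ) : (ρ * covProj d z U).trace * covProj d z U a b =
      ∑ k, ∑ l, ρ k l * (covProj d z U l k * covProj d z U a b) := by
    simp only [trace, diag_apply, mul_apply, Finset.sum_mul, mul_assoc]
  simp_rw [hpt]
  refine (integral_finsetSum _ fun k _ => integrable_finsetSum _ fun l _ =>
    (hint l k a b).const_mul _).trans (Finset.sum_congr rfl fun k _ => ?_)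
  exact (integral_finsetSum _ fun l _ => (hint l k a b).const_mul _).trans
    (Finset.sum_congr rfl fun l _ => integral_const_mul _ _)

theorem sum_sum_projMoment_diag [IsProbabilityMeasure μ] :
    ∑ j, ∑ a, projMoment μ z j j a a = 1 := by
  have hint := integrable_covProj_mul_covProj z μ
  calc ∑ j, ∑ a, projMoment μ z j j a a
      = ∫ U, (covProj d z U).trace * (covProj d z U).trace ∂μ := by
        simp_rw [trace, diag_apply, Finset.sum_mul_sum]
        rw [integral_finsetSum _ fun j _ => integrable_finsetSum _ fun a _ => hint j j a a]
        exact Finset.sum_congr rfl fun j _ => (integral_finsetSum _ fun a _ => hint j j a a).symm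
    _ = 1 := by simp [trace_covProj]

theorem projMoment_comm_left (j i a b : Fin d) :
    projMoment μ z j i a b = projMoment μ z a i j b := by
  simp only [projMoment, covProj_apply]
  congr 1 with U
  ring

theorem projMoment_comm_right (j i a b : Fin d) :
    projMoment μ z j i a b = projMoment μ z j b a i := by
  simp only [projMoment, covProj_apply]
  congr 1 with U
  ring

variable [μ.IsMulLeftInvariant]

theorem projMoment_eq_integral_mul_left (V : unitaryGroup (Fin d) ℂ) (j i a b : Fin d) :
    projMoment μ z j i a b = ∫ U, (V.1 * U.1) j z * conj ((V.1 * U.1) i z) *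
      ((V.1 * U.1) a z * conj ((V.1 * U.1) b z)) ∂μ := by
  simp only [projMoment, covProj_apply]
  exact (integral_mul_left_eq_self (fun U : unitaryGroup (Fin d) ℂ =>
    U.1 j z * conj (U.1 i z) * (U.1 a z * conj (U.1 b z))) V).symm

theorem projMoment_phase {t : Fin d → ℂ} (ht : ∀ x, conj (t x) * t x = 1) (j i a b : Fin d) :
    t j * conj (t i) * (t a * conj (t b)) * projMoment μ z j i a b = projMoment μ z j i a b := by
  conv_rhs => rw [projMoment_eq_integral_mul_left μ z ⟨diagonal t, diagonal_mem_unitaryGroup ht⟩]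
  rw [projMoment, ← integral_const_mul]
  congr 1 with U
  simp only [diagonal_mul, covProj_apply, map_mul]
  ring

theorem projMoment_perm (σ : Equiv.Perm (Fin d)) (j i a b : Fin d) :
    projMoment μ z (σ j) (σ i) (σ a) (σ b) = projMoment μ z j i a b := by
  conv_rhs =>
    rw [projMoment_eq_integral_mul_left μ z ⟨σ.permMatrix ℂ, permMatrix_mem_unitaryGroup σ⟩]
  simp [projMoment, covProj_apply, Equiv.Perm.permMatrix, PEquiv.toMatrix_toPEquiv_mul]

theorem projMoment_eq_zero_of_phase {t : Fin d → ℂ} (ht : ∀ x, conj (t x) * t x = 1)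
    {j i a b : Fin d} (h : t j * conj (t i) * (t a * conj (t b)) ≠ 1) :
    projMoment μ z j i a b = 0 := by
  by_contra hm
  exact h (mul_right_cancel₀ hm ((projMoment_phase μ z ht j i a b).trans (one_mul _).symm))

theorem projMoment_eq_zero_of_ne_left {j i a b : Fin d} (hi : i ≠ j) (hb : b ≠ j) :
    projMoment μ z j i a b = 0 := by
  refine projMoment_eq_zero_of_phase μ z (conj_ite_I_mul_self j) ?_
  simp only [if_neg hi, if_neg hb, map_one, mul_one]
  split_ifs <;> norm_num [Complex.ext_iff]

theorem projMoment_eq_zero_of_ne_right {j i a b : Fin d} (hj : j ≠ i) (ha : a ≠ i) :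
    projMoment μ z j i a b = 0 := by
  refine projMoment_eq_zero_of_phase μ z (conj_ite_I_mul_self i) ?_
  simp only [if_neg hj, if_neg ha, one_mul]
  split_ifs <;> norm_num [Complex.ext_iff]

theorem projMoment_eq_zero {j i a b : Fin d} (h : ¬(j = i ∧ a = b)) (h' : ¬(j = b ∧ a = i)) :
    projMoment μ z j i a b = 0 := by
  by_cases hj : i ≠ j ∧ b ≠ j
  · exact projMoment_eq_zero_of_ne_left μ z hj.1 hj.2
  by_cases ha : i ≠ a ∧ b ≠ a
  · rw [projMoment_comm_left]
    exact projMoment_eq_zero_of_ne_left μ z ha.1 ha.2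
  by_cases hi : j ≠ i ∧ a ≠ i
  · exact projMoment_eq_zero_of_ne_right μ z hi.1 hi.2
  by_cases hb : j ≠ b ∧ a ≠ b
  · rw [projMoment_comm_right]
    exact projMoment_eq_zero_of_ne_right μ z hb.1 hb.2
  grind

theorem projMoment_diag_self_eq (p j : Fin d) :
    projMoment μ z j j j j = projMoment μ z p p p p := by
  simpa using projMoment_perm μ z (Equiv.swap p j) p p p p

theorem projMoment_diag_eq_of_ne {p q j a : Fin d} (hpq : p ≠ q) (hja : j ≠ a) :
    projMoment μ z j j a a = projMoment μ z p p q q := by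
  obtain ⟨σ, rfl, rfl⟩ := Equiv.Perm.exists_apply_eq_and_apply_eq hpq hja
  exact projMoment_perm μ z σ p p q q

theorem projMoment_self_eq_two_mul [IsFiniteMeasure μ] {p q : Fin d} (hpq : p ≠ q) :
    projMoment μ z p p p p = 2 * projMoment μ z p p q q := by
  have hint := integrable_covProj_mul_covProj z μ
  set V : unitaryGroup (Fin d) ℂ := ⟨_, sqrtSwapMatrix_mem_unitaryGroup p q⟩
  have hpt (U : unitaryGroup (Fin d) ℂ) : (V.1 * U.1) p z * conj ((V.1 * U.1) p z) *
      ((V.1 * U.1) q z * conj ((V.1 * U.1) q z)) =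
      (covProj d z U p p * covProj d z U p p + covProj d z U q q * covProj d z U q q +
        covProj d z U p q * covProj d z U p q + covProj d z U q p * covProj d z U q p) / 4 := by
    simp only [V, sqrtSwapMatrix_mul_apply, Equiv.swap_apply_left, Equiv.swap_apply_right,
      covProj_apply, map_add, map_mul, map_div₀, map_sub, map_one, conj_I, map_ofNat]
    ring_nf
    simp only [I_sq, I_pow_four]
    ring
  have hmix : projMoment μ z p p q q = (projMoment μ z p p p p + projMoment μ z q q q q +
      projMoment μ z p q p q + projMoment μ z q p q p) / 4 := by
    rw [projMoment_eq_integral_mul_left μ z V, integral_congr_ae (ae_of_all _ hpt), integral_div,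
      integral_add (((hint p p p p).fun_add (hint q q q q)).fun_add (hint p q p q)) (hint q p q p),
      integral_add ((hint p p p p).fun_add (hint q q q q)) (hint p q p q),
      integral_add (hint p p p p) (hint q q q q)]
    rfl
  rw [projMoment_diag_self_eq μ z p q,
    projMoment_eq_zero μ z (j := p) (i := q) (a := p) (b := q) (by tauto) (by tauto),
    projMoment_eq_zero μ z (j := q) (i := p) (a := q) (b := p) (by tauto) (by tauto)] at hmix
  linear_combination -2 * hmix

theorem exists_projMoment_diag [IsFiniteMeasure μ] :
    ∃ κ, ∀ j a, projMoment μ z j j a a = (1 + (1 : Matrix _ _ ℂ) j a) * κ := by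
  by_cases h : ∃ p q : Fin d, p ≠ q
  · obtain ⟨p, q, hpq⟩ := h
    refine ⟨projMoment μ z p p q q, fun j a => ?_⟩
    rcases eq_or_ne j a with rfl | hja
    · rw [one_apply_eq, projMoment_diag_self_eq μ z p, projMoment_self_eq_two_mul μ z hpq]
      ring
    · rw [one_apply_ne hja, projMoment_diag_eq_of_ne μ z hpq hja]
      ring
  · push Not at h
    refine ⟨projMoment μ z z z z z / 2, fun j a => ?_⟩
    obtain rfl := h j z
    obtain rfl := h a j
    rw [one_apply_eq]
    ring

theorem projMoment_diag [IsProbabilityMeasure μ] (j a : Fin d) :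
    projMoment μ z j j a a = (1 + (1 : Matrix _ _ ℂ) j a) / (d * (d + 1)) := by
  obtain ⟨κ, hκ⟩ := exists_projMoment_diag μ z
  have hnorm : (d * (d + 1) : ℂ) * κ = 1 := by
    have := sum_sum_projMoment_diag μ z
    simp only [hκ, add_mul, one_mul, Finset.sum_add_distrib, one_apply, ite_mul, zero_mul,
      Finset.sum_ite_eq, Finset.mem_univ, if_true, Finset.sum_const, Finset.card_univ,
      Fintype.card_fin, nsmul_eq_mul] at this
    linear_combination this
  rw [hκ, eq_div_iff (left_ne_zero_of_mul_eq_one hnorm)]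
  linear_combination (1 + (1 : Matrix _ _ ℂ) j a) * hnorm

theorem projMoment_eq [IsProbabilityMeasure μ] (j i a b : Fin d) :
    projMoment μ z j i a b = ((1 : Matrix _ _ ℂ) j i * (1 : Matrix _ _ ℂ) a b +
      (1 : Matrix _ _ ℂ) j b * (1 : Matrix _ _ ℂ) a i) / (d * (d + 1)) := by
  by_cases h : j = i ∧ a = b
  · obtain ⟨rfl, rfl⟩ := h
    rw [projMoment_diag, one_apply_eq, one_apply_eq]
    rcases eq_or_ne j a with rfl | hja
    · simp
    · simp [one_apply_ne hja, one_apply_ne hja.symm]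
  by_cases h' : j = b ∧ a = i
  · obtain ⟨rfl, rfl⟩ := h'
    have hja : j ≠ a := fun hja => h ⟨hja, hja.symm⟩
    rw [projMoment_comm_right, projMoment_diag, one_apply_ne hja, one_apply_ne hja.symm]
    simp
  · rw [projMoment_eq_zero μ z h h', one_apply, one_apply, one_apply, one_apply]
    split_ifs <;> simp_all

end ProjMoment

/-- The measure-and-prepare channel of the covariant measurement:
`d·∫ Tr(ρ · U E₁₁ U*) · U E₁₁ U* dU = (ρ + Tr(ρ)·I)/(d+1)` (entrywise), and in particular
`(ρ + I)/(d+1)` when `ρ` is a density matrix. -/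
theorem covariant_measure_and_prepare_channel
    (d : ℕ) (hd : 0 < d)
    (μ : Measure (Matrix.unitaryGroup (Fin d) ℂ)) [IsProbabilityMeasure μ]
    (hμ : ∀ V : Matrix.unitaryGroup (Fin d) ℂ, μ.map (fun U => V * U) = μ)
    (ρ : Matrix (Fin d) (Fin d) ℂ) :
    (∀ a b : Fin d,
      (d : ℂ) * ∫ U, Matrix.trace (ρ * covProj d ⟨0, hd⟩ U) * covProj d ⟨0, hd⟩ U a b ∂μ
        = ((ρ + ρ.trace • (1 : Matrix (Fin d) (Fin d) ℂ)) a b) / ((d : ℂ) + 1)) ∧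
    (IsDensityMatrix ρ → ∀ a b : Fin d,
      (d : ℂ) * ∫ U, Matrix.trace (ρ * covProj d ⟨0, hd⟩ U) * covProj d ⟨0, hd⟩ U a b ∂μ
        = ((ρ + (1 : Matrix (Fin d) (Fin d) ℂ)) a b) / ((d : ℂ) + 1)) := by
  have : μ.IsMulLeftInvariant := ⟨hμ⟩
  have channel (a b : Fin d) :
      (d : ℂ) * ∫ U, Matrix.trace (ρ * covProj d ⟨0, hd⟩ U) * covProj d ⟨0, hd⟩ U a b ∂μ
        = ((ρ + ρ.trace • (1 : Matrix (Fin d) (Fin d) ℂ)) a b) / ((d : ℂ) + 1) := by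
    simp_rw [integral_trace_mul_covProj_mul, projMoment_eq, mul_div_assoc', ← Finset.sum_div,
      ← add_trace_smul_one_apply_eq_sum]
    field_simp
  refine ⟨channel, fun hρ a b => ?_⟩
  rw [channel, hρ.2, one_smul]
end

section
/- For every d ≥ 1 and every d×d Hermitian matrix X with Tr(X) = 0, one has d² · ∫_{U(d)} ( Tr(U E₁₁ U* · X) )² dU = (d/(d+1)) · ‖X‖₂², where ‖X‖₂² = Tr(X²) is the squared Frobenius norm. In other words, the covariant measurement map is, up to the factor d/(d+1), an isometry on traceless Hermitian matrices. -/
open MeasureTheory ProbabilityTheory Matrix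
open scoped ComplexOrder

/-!
Diagonalise `X = W diag(λ) W*`. By left invariance of `μ` under `W`, the integrand becomes
`(∑ₖ λₖ |U_{k0}|²)²`, so only the moments `m_{ij} = ∫ |U_{i0}|² |U_{j0}|²` matter. Left
multiplication by permutation matrices shows `m_{ii} = a` and `m_{ij} = b` for `i ≠ j`, and since
the column `(|U_{k0}|²)ₖ` is a probability vector, `a + (d - 1) b = 1/d`. Left multiplication by
the two unitaries acting as `(1/√2) [[1, c], [c̄, -1]]` on a coordinate plane, with `c = 1` and
`c = i`, gives `a = 2b` through the parallelogram law
`|u² - v²|² + |u² + v²|² = 2 (|u|⁴ + |v|⁴)`. Hence `b = 1/(d(d+1))`, and the integral equals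
`((∑ λ)² + ∑ λ²)/(d(d+1)) = Tr(X²)/(d(d+1))` because `Tr X = 0`.
-/

namespace Matrix

variable {n : Type*} [Fintype n] [DecidableEq n]

section Perm

variable {α : Type*} [CommRing α] [StarRing α]

def permUnitary (σ : Equiv.Perm n) : unitaryGroup n α :=
  ⟨σ.permMatrix α, by
    rw [mem_unitaryGroup_iff', star_eq_conjTranspose, conjTranspose_permMatrix, ← permMatrix_mul,
      mul_inv_cancel, permMatrix_one]⟩

lemma permUnitary_mul_apply (σ : Equiv.Perm n) (U : unitaryGroup n α) (i j : n) :
    ((permUnitary σ * U : unitaryGroup n α) : Matrix n n α) i j = (U : Matrix n n α) (σ i) j := by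
  simp [permUnitary, PEquiv.toMatrix_toPEquiv_mul]

end Perm

section Hadamard

lemma inv_sqrt_two_smul_add_one_sub_mem_unitaryGroup {A P : Matrix n n ℂ} (hA : star A = A)
    (hP : star P = P) (hPP : P * P = P) (hAP : A * P = A) (hPA : P * A = A)
    (hAA : A * A = (2 : ℂ) • P) :
    (Real.sqrt 2 : ℂ)⁻¹ • A + (1 - P) ∈ unitaryGroup n ℂ := by
  have hs : star (Real.sqrt 2 : ℂ)⁻¹ = (Real.sqrt 2 : ℂ)⁻¹ := by simp
  have hs2 : (Real.sqrt 2 : ℂ)⁻¹ ^ 2 * 2 = 1 := by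
    rw [inv_pow, ← Complex.ofReal_pow, Real.sq_sqrt zero_le_two]; norm_num
  rw [mem_unitaryGroup_iff', star_add, star_sub, star_smul, hA, hP, hs, star_one]
  simp only [add_mul, mul_add, sub_mul, mul_sub, smul_mul_assoc, mul_smul_comm, one_mul, mul_one,
    hAA, hAP, hPA, hPP, smul_smul]
  match_scalars <;> first | ring1 | linear_combination hs2

variable {p q : n}

noncomputable def hadamardUnitary (hpq : p ≠ q) (c : ℂ) (hc : star c * c = 1) :
    unitaryGroup n ℂ :=
  ⟨(Real.sqrt 2 : ℂ)⁻¹ • (single p p 1 + single p q c + single q p (star c) - single q q 1)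
      + (1 - (single p p 1 + single q q 1)), by
    apply inv_sqrt_two_smul_add_one_sub_mem_unitaryGroup <;>
      simp only [star_sub, star_add, star_eq_conjTranspose, conjTranspose_single, star_one,
        star_star, add_mul, mul_add, sub_mul, mul_sub, single_mul_single_same,
        single_mul_single_of_ne, ne_eq, hpq, Ne.symm hpq, not_false_eq_true, one_mul, mul_one, hc,
        mul_comm c (star c)]
    all_goals module⟩

lemma hadamardUnitary_mul_apply_left (hpq : p ≠ q) (c : ℂ) (hc : star c * c = 1)
    (U : unitaryGroup n ℂ) (j : n) :
    ((hadamardUnitary hpq c hc * U : unitaryGroup n ℂ) : Matrix n n ℂ) p j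
      = (Real.sqrt 2 : ℂ)⁻¹ * ((U : Matrix n n ℂ) p j + c * (U : Matrix n n ℂ) q j) := by
  simp [hadamardUnitary, add_mul, sub_mul, single_mul_apply_same, single_mul_apply_of_ne, hpq]

lemma hadamardUnitary_mul_apply_right (hpq : p ≠ q) (c : ℂ) (hc : star c * c = 1)
    (U : unitaryGroup n ℂ) (j : n) :
    ((hadamardUnitary hpq c hc * U : unitaryGroup n ℂ) : Matrix n n ℂ) q j
      = (Real.sqrt 2 : ℂ)⁻¹ * (star c * (U : Matrix n n ℂ) p j - (U : Matrix n n ℂ) q j) := by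
  simp [hadamardUnitary, add_mul, sub_mul, single_mul_apply_same, single_mul_apply_of_ne,
    Ne.symm hpq]

end Hadamard

section NormSqEntry

noncomputable def normSqEntry (U : unitaryGroup n ℂ) (i j : n) : ℝ :=
  Complex.normSq ((U : Matrix n n ℂ) i j)

lemma normSqEntry_nonneg (U : unitaryGroup n ℂ) (i j : n) : 0 ≤ normSqEntry U i j :=
  Complex.normSq_nonneg _

lemma sum_normSqEntry (U : unitaryGroup n ℂ) (j : n) : ∑ i, normSqEntry U i j = 1 := by
  have h := congr_fun₂ (UnitaryGroup.star_mul_self U) j j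
  simp only [mul_apply, star_apply, one_apply_eq] at h
  apply Complex.ofReal_injective
  simpa [normSqEntry, Complex.normSq_eq_conj_mul_self] using h

lemma normSqEntry_le_one (U : unitaryGroup n ℂ) (i j : n) : normSqEntry U i j ≤ 1 :=
  sum_normSqEntry U j ▸
    Finset.single_le_sum (fun k _ => normSqEntry_nonneg U k j) (Finset.mem_univ i)

lemma normSqEntry_permUnitary_mul (σ : Equiv.Perm n) (U : unitaryGroup n ℂ) (i j : n) :
    normSqEntry (permUnitary σ * U) i j = normSqEntry U (σ i) j := by
  rw [normSqEntry, permUnitary_mul_apply, normSqEntry]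

lemma normSqEntry_hadamardUnitary_mul {p q : n} (hpq : p ≠ q) (U : unitaryGroup n ℂ) (j : n) :
    normSqEntry (hadamardUnitary hpq 1 (by simp) * U) p j *
        normSqEntry (hadamardUnitary hpq 1 (by simp) * U) q j +
      normSqEntry (hadamardUnitary hpq Complex.I (by simp) * U) p j *
        normSqEntry (hadamardUnitary hpq Complex.I (by simp) * U) q j
      = (normSqEntry U p j ^ 2 + normSqEntry U q j ^ 2) / 2 := by
  have hs : Complex.normSq (Real.sqrt 2 : ℂ)⁻¹ = 2⁻¹ := by
    rw [Complex.normSq_inv, Complex.normSq_ofReal, Real.mul_self_sqrt zero_le_two]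
  simp only [normSqEntry, hadamardUnitary_mul_apply_left, hadamardUnitary_mul_apply_right,
    Complex.normSq_mul, hs]
  simp only [Complex.normSq_apply, Complex.add_re, Complex.add_im, Complex.sub_re,
    Complex.sub_im, Complex.mul_re, Complex.mul_im, Complex.I_re, Complex.I_im, Complex.one_re,
    Complex.one_im, Complex.star_def, Complex.conj_re, Complex.conj_im]
  ring

lemma re_star_mul_diagonal_mul_apply (U : unitaryGroup n ℂ) (lam : n → ℝ) (j : n) :
    ((star (U : Matrix n n ℂ) * diagonal (RCLike.ofReal ∘ lam) * (U : Matrix n n ℂ) :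
        Matrix n n ℂ) j j).re
      = ∑ k, lam k * normSqEntry U k j := by
  rw [Matrix.mul_assoc, mul_apply, Complex.re_sum]
  refine Finset.sum_congr rfl fun k _ => ?_
  simp [diagonal_mul, normSqEntry, Complex.normSq_apply]
  ring

end NormSqEntry

lemma IsHermitian.re_star_mul_mul_eigenvectorUnitary_mul {X : Matrix n n ℂ} (hX : X.IsHermitian)
    (U : unitaryGroup n ℂ) (j : n) :
    ((star ((hX.eigenvectorUnitary * U : unitaryGroup n ℂ) : Matrix n n ℂ) * X *
      (hX.eigenvectorUnitary * U : unitaryGroup n ℂ) : Matrix n n ℂ) j j).re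
      = ∑ k, hX.eigenvalues k * normSqEntry U k j := by
  have hD := hX.conjStarAlgAut_star_eigenvectorUnitary
  rw [Unitary.conjStarAlgAut_star_apply] at hD
  rw [← re_star_mul_diagonal_mul_apply, ← hD]
  simp only [Submonoid.coe_mul, star_mul, Matrix.mul_assoc]

lemma IsHermitian.trace_mul_self {𝕜 : Type*} [RCLike 𝕜] {X : Matrix n n 𝕜} (hX : X.IsHermitian) :
    trace (X * X) = ∑ i, (hX.eigenvalues i : 𝕜) ^ 2 := by
  conv_lhs => rw [hX.spectral_theorem, ← map_mul, Unitary.conjStarAlgAut_apply, trace_mul_cycle,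
    Unitary.coe_star_mul_self, one_mul, diagonal_mul_diagonal, trace_diagonal]
  simp [sq]

lemma IsHermitian.sum_eigenvalues_eq_zero {𝕜 : Type*} [RCLike 𝕜] {X : Matrix n n 𝕜}
    (hX : X.IsHermitian) (htr : X.trace = 0) : ∑ i, hX.eigenvalues i = 0 := by
  have h := hX.trace_eq_sum_eigenvalues
  rw [htr, ← RCLike.ofReal_sum] at h
  exact RCLike.ofReal_eq_zero.mp h.symm

end Matrix

section UnitaryGroupMeasure

open Finset

variable {d : ℕ}

lemma measurable_unitaryGroup_apply (i j : Fin d) :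
    Measurable fun U : unitaryGroup (Fin d) ℂ => (U : Matrix (Fin d) (Fin d) ℂ) i j :=
  (measurable_pi_apply j).comp ((measurable_pi_apply i).comp measurable_subtype_coe)

instance : MeasurableMul₂ (unitaryGroup (Fin d) ℂ) where
  measurable_mul := by
    refine Measurable.subtype_mk
      (measurable_pi_lambda _ fun i => measurable_pi_lambda _ fun j => ?_)
    simp only [mul_apply]
    exact Finset.measurable_sum _ fun k _ =>
      ((measurable_unitaryGroup_apply i k).comp measurable_fst).mul
        ((measurable_unitaryGroup_apply k j).comp measurable_snd)

lemma measurable_normSqEntry (i j : Fin d) :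
    Measurable fun U : unitaryGroup (Fin d) ℂ => normSqEntry U i j :=
  Complex.continuous_normSq.measurable.comp (measurable_unitaryGroup_apply i j)

variable (μ : Measure (unitaryGroup (Fin d) ℂ))

lemma integrable_normSqEntry [IsFiniteMeasure μ] (i j : Fin d) :
    Integrable (fun U => normSqEntry U i j) μ :=
  .of_bound (measurable_normSqEntry i j).aestronglyMeasurable 1 <| .of_forall fun U => by
    rw [Real.norm_of_nonneg (normSqEntry_nonneg U i j)]; exact normSqEntry_le_one U i j

lemma integrable_normSqEntry_mul [IsFiniteMeasure μ] (i j k l : Fin d) :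
    Integrable (fun U => normSqEntry U i j * normSqEntry U k l) μ :=
  (integrable_normSqEntry μ k l).bdd_mul (measurable_normSqEntry i j).aestronglyMeasurable
    (c := 1) <| .of_forall fun U => by
      rw [Real.norm_of_nonneg (normSqEntry_nonneg U i j)]; exact normSqEntry_le_one U i j

variable [μ.IsMulLeftInvariant] (z : Fin d)

lemma integral_comp_normSqEntry_perm (σ : Equiv.Perm (Fin d)) (F : (Fin d → ℝ) → ℝ) :
    ∫ U, F (fun i => normSqEntry U (σ i) z) ∂μ = ∫ U, F (fun i => normSqEntry U i z) ∂μ := by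
  simp_rw [← normSqEntry_permUnitary_mul]
  exact integral_mul_left_eq_self (fun U => F fun i => normSqEntry U i z) _

variable [IsProbabilityMeasure μ]

lemma integral_normSqEntry (i : Fin d) : ∫ U, normSqEntry U i z ∂μ = 1 / d := by
  have hperm (k : Fin d) : ∫ U, normSqEntry U k z ∂μ = ∫ U, normSqEntry U i z ∂μ := by
    simpa using integral_comp_normSqEntry_perm μ z (Equiv.swap i k) (fun v => v i)
  have hsum : ∑ k, ∫ U, normSqEntry U k z ∂μ = 1 := by
    rw [← integral_finsetSum _ fun k _ => integrable_normSqEntry μ k z]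
    simp [sum_normSqEntry]
  simp only [hperm, sum_const, card_univ, Fintype.card_fin, nsmul_eq_mul] at hsum
  have : (d : ℝ) ≠ 0 := by exact_mod_cast (Fin.pos i).ne'
  field_simp
  linarith

lemma integral_normSqEntry_mul_self_add {i : Fin d} {b : ℝ}
    (hb : ∀ k ≠ i, ∫ U, normSqEntry U i z * normSqEntry U k z ∂μ = b) :
    ∫ U, normSqEntry U i z * normSqEntry U i z ∂μ + (d - 1) * b = 1 / d := by
  have hrow : ∑ k, ∫ U, normSqEntry U i z * normSqEntry U k z ∂μ = 1 / d := by
    rw [← integral_finsetSum _ fun k _ => integrable_normSqEntry_mul μ i z k z]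
    simp_rw [← mul_sum, sum_normSqEntry, mul_one]
    exact integral_normSqEntry μ z i
  rwa [← add_sum_erase _ _ (mem_univ i), sum_congr rfl fun k hk => hb k (ne_of_mem_erase hk),
    sum_const, card_erase_of_mem (mem_univ i), card_univ, Fintype.card_fin, nsmul_eq_mul,
    Nat.cast_pred (Fin.pos i)] at hrow

lemma integral_normSqEntry_mul_self_eq_two_mul {i j : Fin d} (hij : i ≠ j) :
    ∫ U, normSqEntry U i z * normSqEntry U i z ∂μ
      = 2 * ∫ U, normSqEntry U i z * normSqEntry U j z ∂μ := by
  set f := fun U : unitaryGroup (Fin d) ℂ => normSqEntry U i z * normSqEntry U j z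
  have hsq : ∫ U, normSqEntry U j z * normSqEntry U j z ∂μ
      = ∫ U, normSqEntry U i z * normSqEntry U i z ∂μ := by
    simpa using integral_comp_normSqEntry_perm μ z (Equiv.swap i j) (fun v => v i * v i)
  have hint (V : unitaryGroup (Fin d) ℂ) : Integrable (fun U => f (V * U)) μ :=
    (integrable_normSqEntry_mul μ i z j z).comp_mul_left V
  calc ∫ U, normSqEntry U i z * normSqEntry U i z ∂μ
      = ∫ U, (normSqEntry U i z ^ 2 + normSqEntry U j z ^ 2) / 2 ∂μ := by
        simp_rw [add_div, sq]
        rw [integral_add ((integrable_normSqEntry_mul μ i z i z).div_const 2)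
          ((integrable_normSqEntry_mul μ j z j z).div_const 2), integral_div, integral_div, hsq]
        ring
    _ = ∫ U, f (hadamardUnitary hij 1 (by simp) * U) ∂μ
          + ∫ U, f (hadamardUnitary hij Complex.I (by simp) * U) ∂μ := by
        rw [← integral_add (hint _) (hint _)]
        simp only [f, normSqEntry_hadamardUnitary_mul]
    _ = 2 * ∫ U, f U ∂μ := by rw [integral_mul_left_eq_self, integral_mul_left_eq_self]; ring

lemma integral_normSqEntry_mul_of_ne {i j : Fin d} (hij : i ≠ j) :
    ∫ U, normSqEntry U i z * normSqEntry U j z ∂μ = 1 / (d * (d + 1)) := by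
  have hrow := integral_normSqEntry_mul_self_add μ z (i := i) fun k hki => by
    simpa [Equiv.swap_apply_of_ne_of_ne hij hki.symm] using
      integral_comp_normSqEntry_perm μ z (Equiv.swap j k) (fun v => v i * v j)
  rw [integral_normSqEntry_mul_self_eq_two_mul μ z hij] at hrow
  have : (d : ℝ) ≠ 0 := by exact_mod_cast (Fin.pos i).ne'
  field_simp at hrow ⊢
  linear_combination hrow

lemma integral_normSqEntry_mul (i j : Fin d) :
    ∫ U, normSqEntry U i z * normSqEntry U j z ∂μ
      = (if i = j then 2 else 1) / (d * (d + 1)) := by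
  split_ifs with hij
  · subst hij
    have hrow := integral_normSqEntry_mul_self_add μ z (i := i) fun k hki =>
      integral_normSqEntry_mul_of_ne μ z (Ne.symm hki)
    have : (d : ℝ) ≠ 0 := by exact_mod_cast (Fin.pos i).ne'
    field_simp at hrow ⊢
    linear_combination hrow
  · exact integral_normSqEntry_mul_of_ne μ z hij

lemma integral_sq_sum_mul_normSqEntry (lam : Fin d → ℝ) :
    ∫ U, (∑ k, lam k * normSqEntry U k z) ^ 2 ∂μ
      = ((∑ k, lam k) ^ 2 + ∑ k, lam k ^ 2) / (d * (d + 1)) := by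
  simp_rw [sq, sum_mul_sum, mul_mul_mul_comm]
  rw [integral_finsetSum _ fun k _ => integrable_finsetSum _ fun l _ =>
    (integrable_normSqEntry_mul μ k z l z).const_mul (lam k * lam l)]
  simp_rw [integral_finsetSum _ fun l _ => (integrable_normSqEntry_mul μ _ z l z).const_mul _,
    integral_const_mul, integral_normSqEntry_mul, mul_div_assoc', ← sum_div]
  congr 1
  have h (k l : Fin d) : lam k * lam l * (if k = l then (2 : ℝ) else 1)
      = lam k * lam l + if k = l then lam k * lam l else 0 := by
    split_ifs <;> ring
  simp_rw [h, sum_add_distrib, sum_ite_eq, mem_univ, if_true]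

end UnitaryGroupMeasure

lemma trace_covProj_mul {d : ℕ} (j : Fin d) (U : unitaryGroup (Fin d) ℂ)
    (M : Matrix (Fin d) (Fin d) ℂ) :
    trace (covProj d j U * M)
      = (star (U : Matrix (Fin d) (Fin d) ℂ) * M * (U : Matrix (Fin d) (Fin d) ℂ)) j j := by
  rw [covProj, Matrix.mul_assoc, Matrix.mul_assoc, trace_mul_comm, Matrix.mul_assoc,
    trace_single_mul, one_smul, Matrix.mul_assoc]

/-- Up to the factor `d/(d+1)`, the covariant measurement map is an isometry on
traceless Hermitian matrices: `d²·∫ (Tr(U E₁₁ U* · X))² dU = (d/(d+1))·Tr(X²)`. -/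
theorem covariant_map_isometry_traceless
    (d : ℕ) (hd : 0 < d)
    (μ : Measure (Matrix.unitaryGroup (Fin d) ℂ)) [IsProbabilityMeasure μ]
    (hμ : ∀ V : Matrix.unitaryGroup (Fin d) ℂ, μ.map (fun U => V * U) = μ)
    (X : Matrix (Fin d) (Fin d) ℂ) (hX : X.IsHermitian) (htr : X.trace = 0) :
    (d : ℝ) ^ 2 * ∫ U, (Matrix.trace (covProj d ⟨0, hd⟩ U * X)).re ^ 2 ∂μ
      = ((d : ℝ) / ((d : ℝ) + 1)) * (Matrix.trace (X * X)).re := by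
  have : μ.IsMulLeftInvariant := ⟨hμ⟩
  have hsq : (trace (X * X)).re = ∑ k, hX.eigenvalues k ^ 2 := by
    simp [hX.trace_mul_self, ← Complex.ofReal_pow]
  rw [← integral_mul_left_eq_self _ hX.eigenvectorUnitary]
  simp_rw [trace_covProj_mul, hX.re_star_mul_mul_eigenvectorUnitary_mul]
  rw [integral_sq_sum_mul_normSqEntry, hX.sum_eigenvalues_eq_zero htr, hsq]
  have : (d : ℝ) ≠ 0 := by positivity
  field_simp
  ring
end

section
/- For every d ≥ 1 and all indices i, j, k, l ∈ {1,…,d}, the Haar integral of a degree-four monomial in the entries of the first column of a random unitary satisfies ∫_{U(d)} U_{j1} U_{k1} · conj(U_{i1}) · conj(U_{l1}) dU = (δ_{ji}δ_{kl} + δ_{jl}δ_{ki}) / (d(d+1)). -/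
open MeasureTheory ProbabilityTheory Matrix
open scoped ComplexOrder

/-!
Left invariance of `μ` makes the moment tensor `T j k i l = E[x_j x_k x̄_i x̄_l]` of a column
`x = U e_c` covariant: `T = (V ⊗ V ⊗ V̄ ⊗ V̄) T` for every unitary `V`. Diagonal phase matrices
kill every entry with `{j, k} ≠ {i, l}` as multisets, so only `E|x_p|⁴` and `E|x_p|²|x_q|²`
remain. A real reflection mixing the coordinates `p` and `q` forces
`E|x_p|⁴ = E|x_q|⁴ = 2 E|x_p|²|x_q|²`, and squaring `∑ |x_j|² = 1` then gives
`(d² + d) E|x_p|²|x_q|² = 1`.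
-/

open scoped ComplexConjugate

@[fun_prop]
lemma Complex.measurable_conj : Measurable (conj : ℂ → ℂ) :=
  Complex.continuous_conj.measurable

namespace Matrix

variable {n α : Type*} [Fintype n] [DecidableEq n] [CommRing α] [StarRing α]

lemma diagonal_mem_unitaryGroup_s8 {θ : n → α} (hθ : ∀ i, star (θ i) * θ i = 1) :
    diagonal θ ∈ unitaryGroup n α := by
  rw [mem_unitaryGroup_iff', star_eq_conjTranspose, diagonal_conjTranspose, diagonal_mul_diagonal]
  exact diagonal_eq_one.mpr (funext hθ)

lemma one_sub_two_smul_vecMulVec_mem_unitaryGroup {v : n → α} (hv : star v ⬝ᵥ v = 1) :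
    1 - (2 : α) • vecMulVec v (star v) ∈ unitaryGroup n α := by
  have hP : vecMulVec v (star v) * vecMulVec v (star v) = vecMulVec v (star v) := by
    rw [vecMulVec_mul_vecMulVec, hv, one_smul]
  rw [mem_unitaryGroup_iff', star_eq_conjTranspose, conjTranspose_sub, conjTranspose_one,
    conjTranspose_smul, conjTranspose_vecMulVec, star_star, star_ofNat]
  simp only [sub_mul, mul_sub, one_mul, mul_one, smul_mul_smul_comm, hP]
  module

end Matrix

namespace Matrix.UnitaryGroup

variable {d : ℕ}

@[fun_prop]
lemma measurable_entry (i j : Fin d) :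
    Measurable fun U : unitaryGroup (Fin d) ℂ => (U : Matrix (Fin d) (Fin d) ℂ) i j :=
  (measurable_pi_apply j).comp ((measurable_pi_apply i).comp measurable_subtype_coe)

lemma measurable_of_entries {α : Type*} [MeasurableSpace α] {f : α → unitaryGroup (Fin d) ℂ}
    (hf : ∀ i j, Measurable fun a => (f a : Matrix (Fin d) (Fin d) ℂ) i j) : Measurable f :=
  Measurable.subtype_mk <| measurable_pi_lambda _ fun i => measurable_pi_lambda _ fun j => hf i j

instance : MeasurableMul (unitaryGroup (Fin d) ℂ) where
  measurable_const_mul V := measurable_of_entries fun i j => by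
    simp only [mul_val, Matrix.mul_apply]
    fun_prop
  measurable_mul_const V := measurable_of_entries fun i j => by
    simp only [mul_val, Matrix.mul_apply]
    fun_prop

end Matrix.UnitaryGroup

lemma Finset.sum_mul_sum_mul_sum_mul_sum {ι R : Type*} [NonUnitalSemiring R] (s : Finset ι)
    (x y z w : ι → R) :
    (∑ a ∈ s, x a) * (∑ b ∈ s, y b) * (∑ e ∈ s, z e) * (∑ f ∈ s, w f) =
      ∑ a ∈ s, ∑ b ∈ s, ∑ e ∈ s, ∑ f ∈ s, x a * y b * z e * w f := by
  rw [mul_assoc, mul_assoc]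
  simp only [Finset.sum_mul_sum]
  simp only [Finset.mul_sum, mul_assoc]

section ColumnMoment

open Matrix

variable {d : ℕ} (μ : Measure (unitaryGroup (Fin d) ℂ)) (c : Fin d)

noncomputable def columnMoment (j k i l : Fin d) : ℂ :=
  ∫ U, U j c * U k c * conj (U i c) * conj (U l c) ∂μ

lemma integrable_columnMonomial [IsFiniteMeasure μ] (j k i l : Fin d) :
    Integrable (fun U : unitaryGroup (Fin d) ℂ => U j c * U k c * conj (U i c) * conj (U l c))
      μ := by
  refine Integrable.of_bound (by fun_prop) 1 (ae_of_all _ fun U => ?_)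
  have h := fun i j => entry_norm_bound_of_unitary U.2 i j
  simp only [norm_mul, Complex.norm_conj]
  bound [h j c, h k c, h i c, h l c]

variable {μ}

lemma columnMoment_eq_sum [IsFiniteMeasure μ] [μ.IsMulLeftInvariant] (V : unitaryGroup (Fin d) ℂ)
    (j k i l : Fin d) :
    columnMoment μ c j k i l = ∑ a, ∑ b, ∑ e, ∑ f,
      V j a * V k b * conj (V i e) * conj (V l f) * columnMoment μ c a b e f := by
  have hpt (U : unitaryGroup (Fin d) ℂ) :
      (V * U) j c * (V * U) k c * conj ((V * U) i c) * conj ((V * U) l c) =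
        ∑ a, ∑ b, ∑ e, ∑ f, V j a * V k b * conj (V i e) * conj (V l f) *
          (U a c * U b c * conj (U e c) * conj (U f c)) := by
    simp only [UnitaryGroup.mul_val, Matrix.mul_apply, map_sum, map_mul,
      Finset.sum_mul_sum_mul_sum_mul_sum]
    simp only [mul_comm, mul_assoc, mul_left_comm]
  rw [columnMoment, ← integral_mul_left_eq_self _ V]
  simp only [hpt, columnMoment, ← integral_const_mul]
  have := integrable_columnMonomial μ c
  simp (disch := fun_prop) only [integral_finsetSum]

lemma columnMoment_eq_phase_mul [IsFiniteMeasure μ] [μ.IsMulLeftInvariant] {θ : Fin d → ℂ}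
    (hθ : ∀ m, conj (θ m) * θ m = 1) (j k i l : Fin d) :
    columnMoment μ c j k i l =
      θ j * θ k * conj (θ i) * conj (θ l) * columnMoment μ c j k i l := by
  conv_lhs => rw [columnMoment_eq_sum c ⟨diagonal θ, diagonal_mem_unitaryGroup_s8 hθ⟩]
  simp [diagonal_apply, apply_ite conj]

lemma columnMoment_eq_zero_of_phase [IsFiniteMeasure μ] [μ.IsMulLeftInvariant] {θ : Fin d → ℂ}
    (hθ : ∀ m, conj (θ m) * θ m = 1) {j k i l : Fin d}
    (hne : θ j * θ k * conj (θ i) * conj (θ l) ≠ 1) : columnMoment μ c j k i l = 0 := by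
  have h := columnMoment_eq_phase_mul (μ := μ) c hθ j k i l
  exact (mul_eq_zero.mp (by linear_combination -h)).resolve_left (sub_ne_zero.mpr hne)

lemma columnMoment_eq_zero [IsFiniteMeasure μ] [μ.IsMulLeftInvariant] {j k i l : Fin d}
    (h : ¬((j = i ∧ k = l) ∨ (j = l ∧ k = i))) : columnMoment μ c j k i l = 0 := by
  -- the phase `Complex.I` at `m` multiplies `T j k i l` by `Complex.I ^ (n₊ - n₋)`, where `n₊`
  -- and `n₋` count the occurrences of `m` among `j, k` and among `i, l`
  have hθ (m r : Fin d) :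
      conj ((Pi.mulSingle m Complex.I : Fin d → ℂ) r) * (Pi.mulSingle m Complex.I : Fin d → ℂ) r =
        1 := by
    rw [Pi.mulSingle_apply]
    split_ifs <;> simp
  by_cases hji : j = i
  · subst hji
    have hlk : l ≠ k := fun h' => h (Or.inl ⟨rfl, h'.symm⟩)
    refine columnMoment_eq_zero_of_phase c (hθ k) ?_
    by_cases hjk : j = k <;> norm_num [hjk, hlk, Complex.ext_iff]
  by_cases hjl : j = l
  · subst hjl
    have hik : i ≠ k := fun h' => h (Or.inr ⟨rfl, h'.symm⟩)
    refine columnMoment_eq_zero_of_phase c (hθ k) ?_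
    by_cases hjk : j = k <;> norm_num [hjk, hik, Complex.ext_iff]
  refine columnMoment_eq_zero_of_phase c (hθ j) ?_
  by_cases hkj : k = j <;> norm_num [hkj, Ne.symm hji, Ne.symm hjl, Complex.ext_iff]

lemma columnMoment_comm_left (j k i l : Fin d) :
    columnMoment μ c j k i l = columnMoment μ c k j i l := by
  simp only [columnMoment]
  congr 1 with U
  ring

lemma columnMoment_comm_right (j k i l : Fin d) :
    columnMoment μ c j k i l = columnMoment μ c j k l i := by
  simp only [columnMoment]
  congr 1 with U
  ring

lemma columnMoment_diag_eq_of_row_eq [IsFiniteMeasure μ] [μ.IsMulLeftInvariant] {p q : Fin d}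
    (hpq : p ≠ q) (V : unitaryGroup (Fin d) ℂ) (α β : ℝ)
    (hV : V p = Pi.single p (α : ℂ) + Pi.single q (β : ℂ)) :
    columnMoment μ c p p p p = α ^ 4 * columnMoment μ c p p p p +
      β ^ 4 * columnMoment μ c q q q q + 4 * α ^ 2 * β ^ 2 * columnMoment μ c p q p q := by
  have hrow (g : Fin d → ℂ) : ∑ r, V p r * g r = α * g p + β * g q := by
    simp [hV, Pi.single_apply, add_mul, Finset.sum_add_distrib, ite_mul]
  have hrow' (g : Fin d → ℂ) : ∑ r, conj (V p r) * g r = α * g p + β * g q := by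
    simp [hV, Pi.single_apply, add_mul, Finset.sum_add_distrib, ite_mul, apply_ite conj]
  conv_lhs => rw [columnMoment_eq_sum c V]
  simp only [mul_assoc, ← Finset.mul_sum]
  simp only [hrow, hrow']
  -- only the phase-balanced terms of the expansion survive
  simp (disch := simp [hpq, hpq.symm]) only [columnMoment_eq_zero (μ := μ) c, mul_zero, add_zero,
    zero_add]
  rw [columnMoment_comm_right c p q q p, columnMoment_comm_left c q p p q,
    columnMoment_comm_left c q p q p, columnMoment_comm_right c p q q p]
  ring

/-- The Householder reflection `1 - 2 v v*` in `v = (3/5) e_p + (4/5) e_q`: rational entries, so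
no square roots. -/
lemma exists_unitaryGroup_row_eq_single_add_single {p q : Fin d} (hpq : p ≠ q) :
    ∃ V : unitaryGroup (Fin d) ℂ,
      V p = Pi.single p ((7 / 25 : ℝ) : ℂ) + Pi.single q ((-24 / 25 : ℝ) : ℂ) := by
  set v : Fin d → ℂ := Pi.single p (3 / 5) + Pi.single q (4 / 5)
  have hv : star v ⬝ᵥ v = 1 := by
    simp [v, dotProduct, Pi.single_apply, add_mul, mul_add, Finset.sum_add_distrib,
      apply_ite conj, ite_mul, hpq, hpq.symm, map_div₀, map_ofNat]
    norm_num
  refine ⟨⟨_, one_sub_two_smul_vecMulVec_mem_unitaryGroup hv⟩, funext fun r => ?_⟩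
  by_cases hrp : r = p
  · subst hrp
    simp [v, vecMulVec_apply, hpq.symm]
    norm_num
  · by_cases hrq : r = q
    · subst hrq
      simp [v, vecMulVec_apply, hpq, hrp, one_apply]
      norm_num
    · simp [v, vecMulVec_apply, hpq, hrp, hrq, one_apply, Ne.symm hrp]

lemma columnMoment_diag_eq_and_eq_two_mul [IsFiniteMeasure μ] [μ.IsMulLeftInvariant] {p q : Fin d}
    (hpq : p ≠ q) :
    columnMoment μ c p p p p = columnMoment μ c q q q q ∧
      columnMoment μ c p p p p = 2 * columnMoment μ c p q p q := by
  obtain ⟨V, hV⟩ := exists_unitaryGroup_row_eq_single_add_single hpq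
  obtain ⟨W, hW⟩ := exists_unitaryGroup_row_eq_single_add_single hpq.symm
  have hp := columnMoment_diag_eq_of_row_eq (μ := μ) c hpq V _ _ hV
  have hq := columnMoment_diag_eq_of_row_eq (μ := μ) c hpq.symm W _ _ hW
  rw [columnMoment_comm_left c q p, columnMoment_comm_right c p q] at hq
  push_cast at hp hq
  constructor
  · linear_combination (625 / 1152) * (hp - hq)
  · linear_combination (390625 / 112896) * (hp + hq) + (625 / 2304) * (hp - hq)

lemma columnMoment_eq_delta [IsFiniteMeasure μ] [μ.IsMulLeftInvariant] (p j k i l : Fin d) :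
    columnMoment μ c j k i l =
      ((if j = i then 1 else 0) * (if k = l then 1 else 0) +
        (if j = l then 1 else 0) * (if k = i then 1 else 0)) * (columnMoment μ c p p p p / 2) := by
  have hdiag (m : Fin d) : columnMoment μ c m m m m = columnMoment μ c p p p p := by
    rcases eq_or_ne m p with rfl | hmp
    · rfl
    · exact (columnMoment_diag_eq_and_eq_two_mul c hmp).1
  have hpair (j k : Fin d) (hjk : j ≠ k) :
      columnMoment μ c j k j k = columnMoment μ c p p p p / 2 := by
    rw [← hdiag j, (columnMoment_diag_eq_and_eq_two_mul c hjk).2]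
    ring
  by_cases h : (j = i ∧ k = l) ∨ (j = l ∧ k = i)
  · rcases h with ⟨rfl, rfl⟩ | ⟨rfl, rfl⟩ <;> rcases eq_or_ne j k with rfl | hjk
    · rw [hdiag]; simp; ring
    · rw [hpair j k hjk]; simp [hjk]
    · rw [hdiag]; simp; ring
    · rw [← columnMoment_comm_right, hpair j k hjk]; simp [hjk]
  · rw [columnMoment_eq_zero c h]
    split_ifs <;> simp_all

lemma sum_columnMoment_eq_one [IsProbabilityMeasure μ] :
    ∑ j, ∑ k, columnMoment μ c j k j k = 1 := by
  have hcol (U : unitaryGroup (Fin d) ℂ) : ∑ j, conj (U j c) * U j c = 1 := by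
    simpa [mul_apply] using congr_fun₂ (UnitaryGroup.star_mul_self U) c c
  have := integrable_columnMonomial μ c
  calc ∑ j, ∑ k, columnMoment μ c j k j k
      = ∫ U, ∑ j, ∑ k, U j c * U k c * conj (U j c) * conj (U k c) ∂μ := by
        simp (disch := fun_prop) only [columnMoment, integral_finsetSum]
    _ = ∫ _, 1 ∂μ := integral_congr_ae <| ae_of_all _ fun U => by
        rw [← one_mul (1 : ℂ), ← hcol U, Finset.sum_mul_sum]
        exact Finset.sum_congr rfl fun j _ => Finset.sum_congr rfl fun k _ => by ring
    _ = 1 := by simp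

lemma columnMoment_diag_div_two [IsProbabilityMeasure μ] [μ.IsMulLeftInvariant] (p : Fin d) :
    columnMoment μ c p p p p / 2 = ((d : ℂ) * (d + 1))⁻¹ := by
  have h := sum_columnMoment_eq_one (μ := μ) c
  rw [Finset.sum_congr rfl fun j _ => Finset.sum_congr rfl fun k _ =>
    columnMoment_eq_delta c p j k j k] at h
  simp [Finset.sum_add_distrib, add_mul, ite_mul] at h
  exact eq_inv_of_mul_eq_one_right (by linear_combination h)

end ColumnMoment

/-- Degree-four Weingarten integral for the first column of a Haar unitary:
`∫ U_{j1} U_{k1} conj(U_{i1}) conj(U_{l1}) dU = (δ_{ji}δ_{kl} + δ_{jl}δ_{ki})/(d(d+1))`. -/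
theorem haar_first_column_fourth_moment
    (d : ℕ) (hd : 0 < d)
    (μ : Measure (Matrix.unitaryGroup (Fin d) ℂ)) [IsProbabilityMeasure μ]
    (hμ : ∀ V : Matrix.unitaryGroup (Fin d) ℂ, μ.map (fun U => V * U) = μ)
    (i j k l : Fin d) :
    (∫ U, (U : Matrix (Fin d) (Fin d) ℂ) j ⟨0, hd⟩ * (U : Matrix (Fin d) (Fin d) ℂ) k ⟨0, hd⟩ *
        (starRingEnd ℂ) ((U : Matrix (Fin d) (Fin d) ℂ) i ⟨0, hd⟩) *
        (starRingEnd ℂ) ((U : Matrix (Fin d) (Fin d) ℂ) l ⟨0, hd⟩) ∂μ)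
      = ((if j = i then 1 else 0) * (if k = l then 1 else 0) +
          (if j = l then 1 else 0) * (if k = i then 1 else 0)) / ((d : ℂ) * ((d : ℂ) + 1)) := by
  have : μ.IsMulLeftInvariant := ⟨hμ⟩
  rw [div_eq_mul_inv, ← columnMoment_diag_div_two (μ := μ) ⟨0, hd⟩ ⟨0, hd⟩]
  exact columnMoment_eq_delta _ _ j k i l
end
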